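/- Let N ≥ 1 and a_0,…,a_{N−1} ∈ ℝ. Let V ⊆ (ℕ → ℝ) be the set of sequences b such that for all k ∈ ℕ: ((k+N)!/k!) · b_{k+N} + Σ_{j=0}^{N−1} a_j · ((k+j)!/k!) · b_{k+j} = 0 (the formal power series solutions of y^{(N)} + a_{N−1} y^{(N−1)} + … + a_1 y' + a_0 y = 0), and let W ⊆ (ℕ → ℝ) be the set of sequences z such that for all n ∈ ℕ: (Δ^N z)(n) + Σ_{j=0}^{N−1} a_j · (Δ^j z)(n) = 0. Then the ℝ-linear map Φ defined by Φ(b)(n) = Σ_{k=0}^{n} b_k · n!/(n−k)! restricts to a bijection from V onto W. -/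

import Mathlib

/-- The forward difference operator acting on sequences. -/
def fwdDiffSeq (u : ℕ → ℝ) : ℕ → ℝ := fun n => u (n + 1) - u n

/-!
Write `Φ b n = ∑ₖ b k * n.descFactorial k`. Since `Δ` lowers falling factorials exactly as `d/dx`
lowers powers, `Δ (Φ b) = Φ b'`, where `b'` is the coefficient sequence of the formal derivative
of `∑ₖ b k xᵏ`. Hence `Φ` conjugates `D^N + ∑ⱼ aⱼ Dʲ` into `Δ^N + ∑ⱼ aⱼ Δʲ`, and it is a linear
bijection: by the Gregory–Newton formula its inverse is `z ↦ (k ↦ (Δᵏ z)(0) / k!)`. A linear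
bijection conjugating two operators maps the kernel of one onto the kernel of the other.
-/

open Finset Function Nat

lemma Nat.succ_descFactorial_succ_eq_add (n k : ℕ) :
    (n + 1).descFactorial (k + 1) = n.descFactorial (k + 1) + (k + 1) * n.descFactorial k := by
  simp only [descFactorial_eq_factorial_mul_choose, choose_succ_succ', factorial_succ]
  ring

section Transform

variable {R : Type*} [CommRing R]

def descFactorialTransform : (ℕ → R) →ₗ[R] (ℕ → R) where
  toFun b n := ∑ k ∈ range (n + 1), b k * n.descFactorial k
  map_add' b c := by ext n; simp [add_mul, sum_add_distrib]
  map_smul' r b := by ext n; simp [mul_sum, mul_assoc]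

lemma descFactorialTransform_apply (b : ℕ → R) (n : ℕ) :
    descFactorialTransform b n = ∑ k ∈ range (n + 1), b k * n.descFactorial k := rfl

lemma descFactorialTransform_apply_zero (b : ℕ → R) : descFactorialTransform b 0 = b 0 := by
  simp [descFactorialTransform_apply]

def formalDeriv (b : ℕ → R) (k : ℕ) : R := (k + 1) * b (k + 1)

lemma formalDeriv_iterate_apply (j : ℕ) (b : ℕ → R) (k : ℕ) :
    formalDeriv^[j] b k = (k + j).descFactorial j * b (k + j) := by
  induction j generalizing b with
  | zero => simp
  | succ j ih =>
    rw [iterate_succ_apply, ih, formalDeriv, ← add_assoc, succ_descFactorial_succ]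
    push_cast
    ring

lemma fwdDiff_descFactorialTransform (b : ℕ → R) :
    fwdDiff 1 (descFactorialTransform b) = descFactorialTransform (formalDeriv b) := by
  ext n
  have extend : descFactorialTransform b n = ∑ k ∈ range (n + 2), b k * n.descFactorial k := by
    rw [sum_range_succ, descFactorial_of_lt (lt_succ_self n), descFactorialTransform_apply]
    simp
  rw [fwdDiff, extend, descFactorialTransform_apply, ← sum_sub_distrib, sum_range_succ']
  simp only [succ_descFactorial_succ_eq_add, descFactorial_zero]
  push_cast
  simp only [sub_self, add_zero]
  exact sum_congr rfl fun k _ => by rw [formalDeriv]; ring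

lemma semiconj_descFactorialTransform :
    Semiconj (descFactorialTransform (R := R)) formalDeriv (fwdDiff 1) :=
  fun b => (fwdDiff_descFactorialTransform b).symm

lemma map_iterate_add_sum_smul_iterate {M M' F : Type*} [AddCommMonoid M] [Module R M]
    [AddCommMonoid M'] [Module R M'] [FunLike F M M'] [LinearMapClass F R M M'] (Φ : F)
    {f : M → M} {g : M' → M'} (h : Semiconj Φ f g) (a : ℕ → R) (N : ℕ) (x : M) :
    Φ (f^[N] x + ∑ j ∈ range N, a j • f^[j] x)
      = g^[N] (Φ x) + ∑ j ∈ range N, a j • g^[j] (Φ x) := by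
  simp [(h.iterate_right _).eq]

lemma bijOn_setOf_iterate_add_sum_smul_iterate_eq_zero {M M' : Type*} [AddCommMonoid M]
    [Module R M] [AddCommMonoid M'] [Module R M'] (e : M ≃ₗ[R] M') {f : M → M} {g : M' → M'}
    (h : Semiconj e f g) (a : ℕ → R) (N : ℕ) :
    Set.BijOn e {x | f^[N] x + ∑ j ∈ range N, a j • f^[j] x = 0}
      {y | g^[N] y + ∑ j ∈ range N, a j • g^[j] y = 0} :=
  e.toEquiv.bijOn fun x => by
    simp only [Set.mem_ofPred, LinearEquiv.coe_toEquiv]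
    rw [← map_iterate_add_sum_smul_iterate e h]
    exact e.map_eq_zero_iff

end Transform

section Field

variable {K : Type*} [Field K] [CharZero K]

def newtonCoeff (z : ℕ → K) (k : ℕ) : K := (fwdDiff 1)^[k] z 0 / k !

lemma newtonCoeff_descFactorialTransform (b : ℕ → K) :
    newtonCoeff (descFactorialTransform b) = b := by
  ext k
  rw [newtonCoeff, ← (semiconj_descFactorialTransform.iterate_right k).eq,
    descFactorialTransform_apply_zero, formalDeriv_iterate_apply, zero_add, descFactorial_self]
  field_simp [factorial_ne_zero]

lemma descFactorialTransform_newtonCoeff (z : ℕ → K) :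
    descFactorialTransform (newtonCoeff z) = z := by
  ext n
  have newton := shift_eq_sum_fwdDiff_iter 1 z n 0
  rw [zero_add, smul_eq_mul, mul_one] at newton
  rw [newton, descFactorialTransform_apply]
  refine sum_congr rfl fun k _ => ?_
  rw [newtonCoeff, descFactorial_eq_factorial_mul_choose, nsmul_eq_mul]
  push_cast
  field_simp [factorial_ne_zero]

def descFactorialTransformEquiv : (ℕ → K) ≃ₗ[K] (ℕ → K) :=
  { descFactorialTransform with
    invFun := newtonCoeff
    left_inv := newtonCoeff_descFactorialTransform
    right_inv := descFactorialTransform_newtonCoeff }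

end Field

lemma fwdDiffSeq_eq_fwdDiff_one : fwdDiffSeq = fwdDiff 1 := rfl

theorem fundamental_system_bijection_general (N : ℕ) (a : ℕ → ℝ) :
    Set.BijOn
      (fun (b : ℕ → ℝ) (n : ℕ) =>
        ∑ k ∈ Finset.range (n + 1), b k * (Nat.descFactorial n k : ℝ))
      {b : ℕ → ℝ | ∀ k : ℕ,
        (Nat.descFactorial (k + N) N : ℝ) * b (k + N)
          + ∑ j ∈ Finset.range N, a j * (Nat.descFactorial (k + j) j : ℝ) * b (k + j) = 0}
      {z : ℕ → ℝ | ∀ n : ℕ,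
        (fwdDiffSeq^[N] z) n + ∑ j ∈ Finset.range N, a j * (fwdDiffSeq^[j] z) n = 0} := by
  convert bijOn_setOf_iterate_add_sum_smul_iterate_eq_zero descFactorialTransformEquiv
    semiconj_descFactorialTransform a N using 1
  · rfl
  · ext b
    simp only [Set.mem_ofPred_eq, funext_iff, Pi.add_apply, Finset.sum_apply, Pi.smul_apply,
      smul_eq_mul, Pi.zero_apply, formalDeriv_iterate_apply, mul_assoc]
  · ext z
    simp only [Set.mem_ofPred_eq, funext_iff, Pi.add_apply, Finset.sum_apply, Pi.smul_apply,
      smul_eq_mul, Pi.zero_apply, fwdDiffSeq_eq_fwdDiff_one]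

/-- The interpolating transform maps the space of formal power series solutions of a
constant-coefficient linear ODE bijectively onto the space of solutions of the
associated linear difference equation. -/
theorem fundamental_system_bijection (N : ℕ) (hN : 1 ≤ N) (a : ℕ → ℝ) :
    Set.BijOn
      (fun (b : ℕ → ℝ) (n : ℕ) =>
        ∑ k ∈ Finset.range (n + 1), b k * (Nat.descFactorial n k : ℝ))
      {b : ℕ → ℝ | ∀ k : ℕ,
        (Nat.descFactorial (k + N) N : ℝ) * b (k + N)
          + ∑ j ∈ Finset.range N, a j * (Nat.descFactorial (k + j) j : ℝ) * b (k + j) = 0}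
      {z : ℕ → ℝ | ∀ n : ℕ,
        (fwdDiffSeq^[N] z) n + ∑ j ∈ Finset.range N, a j * (fwdDiffSeq^[j] z) n = 0} :=
  fundamental_system_bijection_general N a
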